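/- Suppose f : ℝⁿ → ℝ is continuously differentiable and λ-strongly convex with L-Lipschitz gradient (0 < λ, L), μ > 0, φ(x) = f(x) + μ‖x‖₁, and x⋆ is a global minimizer of φ. If x, x⁺ ∈ ℝⁿ satisfy φ(x⁺) ≤ Γ(x), then φ(x⁺) − φ(x⋆) ≤ (1 − λ/L)(φ(x) − φ(x⋆)). -/

import Mathlib

open scoped InnerProductSpace
open Set

/-!
Strong convexity gives the first-order bound `f x + ⟪∇f x, y - x⟫ + λ/2 ‖y - x‖² ≤ f y`, so the
ISTA model at `x` exceeds `φ y` by at most `(L - λ)/2 ‖y - x‖²`. Evaluate it at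
`y = x + (λ/L) (z - x)`: strong convexity of `f` on the segment `[x, z]` and convexity of `‖·‖₁`
bound `φ y`, and with this step size the two quadratic terms cancel exactly, leaving
`Γ x ≤ (λ/L) φ z + (1 - λ/L) φ x` for every `z`. The point `y` lies on the segment because
`λ ≤ L`, which follows from comparing strong monotonicity of `∇f` with its Lipschitz bound.
-/

section ProximalGradient

variable {E : Type*} [NormedAddCommGroup E] [InnerProductSpace ℝ E] [CompleteSpace E]
  {f g : E → ℝ} {m L : ℝ}

theorem StrongConvexOn.add_inner_gradient_add_le (hf : StrongConvexOn univ m f) {x : E}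
    (hd : DifferentiableAt ℝ f x) (y : E) :
    f x + ⟪gradient f x, y - x⟫_ℝ + m / 2 * ‖y - x‖ ^ 2 ≤ f y := by
  -- `f - m/2 ‖·‖²` is convex: compare its derivative at `x` along `y - x` with its secant slope.
  set ℓ := AffineMap.lineMap (k := ℝ) x y
  set h : ℝ → ℝ := fun t ↦ f (ℓ t) - m / 2 * ‖ℓ t‖ ^ 2
  have hconv : ConvexOn ℝ univ h :=
    (strongConvexOn_iff_convex.mp hf).comp_affineMap ℓ
  have hderiv : HasDerivAt h (⟪gradient f x, y - x⟫_ℝ - m / 2 * (2 * ⟪x, y - x⟫_ℝ)) 0 := by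
    have hℓ : HasDerivAt ℓ (y - x) 0 := AffineMap.hasDerivAt_lineMap
    have hf' := hd.hasGradientAt.hasFDerivAt
    rw [← AffineMap.lineMap_apply_zero (k := ℝ) x y] at hf'
    refine ((hf'.comp_hasDerivAt 0 hℓ).sub (hℓ.norm_sq.const_mul (m / 2))).congr_deriv ?_
    simp [ℓ]
  have hslope := hconv.le_slope_of_hasDerivAt (mem_univ 0) (mem_univ 1) one_pos hderiv
  simp only [slope_def_field, h, ℓ, AffineMap.lineMap_apply_zero, AffineMap.lineMap_apply_one,
    sub_zero, div_one] at hslope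
  have hy : ‖y‖ ^ 2 = ‖x‖ ^ 2 + 2 * ⟪x, y - x⟫_ℝ + ‖y - x‖ ^ 2 := by
    rw [← norm_add_sq_real, add_sub_cancel]
  linear_combination hslope - m / 2 * hy

theorem StrongConvexOn.mul_sq_le_inner_gradient_sub (hf : StrongConvexOn univ m f)
    (hd : Differentiable ℝ f) (x y : E) :
    m * ‖y - x‖ ^ 2 ≤ ⟪gradient f y - gradient f x, y - x⟫_ℝ := by
  have hxy := hf.add_inner_gradient_add_le (hd x) y
  have hyx := hf.add_inner_gradient_add_le (hd y) x
  rw [← neg_sub, norm_neg, inner_neg_right] at hyx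
  rw [inner_sub_left]
  linarith

theorem StrongConvexOn.le_of_lipschitz_gradient [Nontrivial E] (hf : StrongConvexOn univ m f)
    (hd : Differentiable ℝ f) (hlip : ∀ x y, ‖gradient f x - gradient f y‖ ≤ L * ‖x - y‖) :
    m ≤ L := by
  obtain ⟨v, hv⟩ := exists_ne (0 : E)
  have hv2 : 0 < ‖v‖ ^ 2 := by positivity
  have hmono := hf.mul_sq_le_inner_gradient_sub hd 0 v
  rw [sub_zero] at hmono
  have hcs : ⟪gradient f v - gradient f 0, v⟫_ℝ ≤ L * ‖v‖ ^ 2 := calc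
    _ ≤ ‖gradient f v - gradient f 0‖ * ‖v‖ := real_inner_le_norm _ _
    _ ≤ L * ‖v - 0‖ * ‖v‖ := by gcongr; exact hlip v 0
    _ = L * ‖v‖ ^ 2 := by rw [sub_zero, sq, mul_assoc]
  exact le_of_mul_le_mul_right (hmono.trans hcs) hv2


noncomputable def proxGradModel (f g : E → ℝ) (L : ℝ) (x y : E) : ℝ :=
  f x + ⟪gradient f x, y - x⟫_ℝ + L / 2 * ‖y - x‖ ^ 2 + g y

theorem bddBelow_range_proxGradModel (hL : 0 < L) (hg : BddBelow (range g)) (x : E) :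
    BddBelow (range (proxGradModel f g L x)) := by
  obtain ⟨c, hc⟩ := hg
  refine ⟨f x - ‖gradient f x‖ ^ 2 / (2 * L) + c, ?_⟩
  rintro _ ⟨y, rfl⟩
  have hgy : c ≤ g y := hc (mem_range_self y)
  have hcs : -(‖gradient f x‖ * ‖y - x‖) ≤ ⟪gradient f x, y - x⟫_ℝ :=
    neg_le_of_abs_le (abs_real_inner_le_norm _ _)
  have hsq : L / 2 * ‖y - x‖ ^ 2 - ‖gradient f x‖ * ‖y - x‖ + ‖gradient f x‖ ^ 2 / (2 * L)
      = (L * ‖y - x‖ - ‖gradient f x‖) ^ 2 / (2 * L) := by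
    field_simp
    ring
  have : 0 ≤ (L * ‖y - x‖ - ‖gradient f x‖) ^ 2 / (2 * L) := by positivity
  unfold proxGradModel
  linarith

theorem proxGradModel_le (hf : StrongConvexOn univ m f) {x : E} (hd : DifferentiableAt ℝ f x)
    (y : E) : proxGradModel f g L x y ≤ f y + g y + (L - m) / 2 * ‖y - x‖ ^ 2 := by
  have := hf.add_inner_gradient_add_le hd y
  unfold proxGradModel
  linarith

theorem proxGradModel_lineMap_le (hm : 0 ≤ m) (hmL : m ≤ L) (hL : 0 < L)
    (hf : StrongConvexOn univ m f) {x : E} (hd : DifferentiableAt ℝ f x) (hg : ConvexOn ℝ univ g)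
    (z : E) :
    proxGradModel f g L x ((m / L) • z + (1 - m / L) • x)
      ≤ m / L * (f z + g z) + (1 - m / L) * (f x + g x) := by
  set t := m / L
  have ht0 : 0 ≤ t := div_nonneg hm hL.le
  have ht1 : 0 ≤ 1 - t := sub_nonneg.mpr ((div_le_one hL).mpr hmL)
  have hLt : L * t = m := mul_div_cancel₀ m hL.ne'
  have hfz := hf.2 (mem_univ z) (mem_univ x) ht0 ht1 (add_sub_cancel t 1)
  have hgz := hg.2 (mem_univ z) (mem_univ x) ht0 ht1 (add_sub_cancel t 1)
  have hdist : ‖t • z + (1 - t) • x - x‖ = t * ‖z - x‖ := by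
    rw [show t • z + (1 - t) • x - x = t • (z - x) by module, norm_smul,
      Real.norm_of_nonneg ht0]
  simp only [smul_eq_mul] at hfz hgz
  grw [proxGradModel_le hf hd, hdist]
  linear_combination hfz + hgz + t * ‖z - x‖ ^ 2 / 2 * hLt

theorem sub_le_of_le_iInf_proxGradModel (hm : 0 ≤ m) (hmL : m ≤ L) (hL : 0 < L)
    (hf : StrongConvexOn univ m f) {x : E} (hd : DifferentiableAt ℝ f x) (hg : ConvexOn ℝ univ g)
    (hgb : BddBelow (range g)) {x' : E} (hx' : f x' + g x' ≤ ⨅ y, proxGradModel f g L x y)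
    (z : E) : f x' + g x' - (f z + g z) ≤ (1 - m / L) * (f x + g x - (f z + g z)) := by
  have := calc
    f x' + g x' ≤ ⨅ y, proxGradModel f g L x y := hx'
    _ ≤ proxGradModel f g L x ((m / L) • z + (1 - m / L) • x) :=
      ciInf_le (bddBelow_range_proxGradModel hL hgb x) _
    _ ≤ m / L * (f z + g z) + (1 - m / L) * (f x + g x) :=
      proxGradModel_lineMap_le hm hmL hL hf hd hg z
  linarith

end ProximalGradient

theorem convexOn_sum_abs {ι : Type*} [Fintype ι] :
    ConvexOn ℝ univ fun x : EuclideanSpace ℝ ι ↦ ∑ i, |x i| := by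
  refine ⟨convex_univ, fun x _ y _ a b ha hb _ ↦ ?_⟩
  simp only [smul_eq_mul, Finset.mul_sum, ← Finset.sum_add_distrib, PiLp.add_apply,
    PiLp.smul_apply]
  gcongr with i
  calc |a * x i + b * y i| ≤ |a * x i| + |b * y i| := abs_add_le _ _
    _ = a * |x i| + b * |y i| := by rw [abs_mul, abs_mul, abs_of_nonneg ha, abs_of_nonneg hb]

theorem stmt_1_general {n : ℕ} (hn : 0 < n)
    (f : EuclideanSpace ℝ (Fin n) → ℝ)
    (lam L mu : ℝ) (hlam : 0 < lam) (hL : 0 < L) (hmu : 0 < mu)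
    (hf : ContDiff ℝ 1 f)
    (hsc : ∀ x y : EuclideanSpace ℝ (Fin n), ∀ t ∈ Set.Icc (0:ℝ) 1,
      f (t • x + (1 - t) • y)
        ≤ t * f x + (1 - t) * f y - lam / 2 * t * (1 - t) * ‖x - y‖ ^ 2)
    (hlip : ∀ x y : EuclideanSpace ℝ (Fin n),
      ‖gradient f x - gradient f y‖ ≤ L * ‖x - y‖)
    (φ : EuclideanSpace ℝ (Fin n) → ℝ)
    (hφ : ∀ x, φ x = f x + mu * ∑ i, |x i|)
    (Γ : EuclideanSpace ℝ (Fin n) → ℝ)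
    (hΓ : ∀ x, Γ x = ⨅ y : EuclideanSpace ℝ (Fin n),
      (f x + ⟪gradient f x, y - x⟫_ℝ + L / 2 * ‖y - x‖ ^ 2 + mu * ∑ i, |y i|))
    (xstar : EuclideanSpace ℝ (Fin n))
    (x xplus : EuclideanSpace ℝ (Fin n)) (hstep : φ xplus ≤ Γ x) :
    φ xplus - φ xstar ≤ (1 - lam / L) * (φ x - φ xstar) := by
  have : Nonempty (Fin n) := ⟨⟨0, hn⟩⟩
  have hd : Differentiable ℝ f := hf.differentiable one_ne_zero
  have hsc' : StrongConvexOn univ lam f := by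
    refine ⟨convex_univ, fun y _ z _ a b ha hb hab ↦ ?_⟩
    obtain rfl : b = 1 - a := eq_sub_of_add_eq' hab
    have := hsc y z a ⟨ha, by linarith⟩
    simp only [smul_eq_mul]
    linarith
  have hl1 : ConvexOn ℝ univ fun y : EuclideanSpace ℝ (Fin n) ↦ mu * ∑ i, |y i| :=
    convexOn_sum_abs.smul hmu.le
  have hl1_bdd : BddBelow (range fun y : EuclideanSpace ℝ (Fin n) ↦ mu * ∑ i, |y i|) :=
    ⟨0, by rintro _ ⟨y, rfl⟩; positivity⟩
  simp only [hφ] at hstep ⊢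
  exact sub_le_of_le_iInf_proxGradModel hlam.le (hsc'.le_of_lipschitz_gradient hd hlip) hL hsc'
    (hd x) hl1 hl1_bdd (hstep.trans_eq (hΓ x)) xstar

/-- One-step contraction of the optimality gap for a point `x⁺`
whose objective value is at most the ISTA majorization value `Γ(x)`. -/
theorem stmt_1 {n : ℕ} (hn : 0 < n)
    (f : EuclideanSpace ℝ (Fin n) → ℝ)
    (lam L mu : ℝ) (hlam : 0 < lam) (hL : 0 < L) (hmu : 0 < mu)
    (hf : ContDiff ℝ 1 f)
    (hsc : ∀ x y : EuclideanSpace ℝ (Fin n), ∀ t ∈ Set.Icc (0:ℝ) 1,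
      f (t • x + (1 - t) • y)
        ≤ t * f x + (1 - t) * f y - lam / 2 * t * (1 - t) * ‖x - y‖ ^ 2)
    (hlip : ∀ x y : EuclideanSpace ℝ (Fin n),
      ‖gradient f x - gradient f y‖ ≤ L * ‖x - y‖)
    (φ : EuclideanSpace ℝ (Fin n) → ℝ)
    (hφ : ∀ x, φ x = f x + mu * ∑ i, |x i|)
    (Γ : EuclideanSpace ℝ (Fin n) → ℝ)
    (hΓ : ∀ x, Γ x = ⨅ y : EuclideanSpace ℝ (Fin n),
      (f x + ⟪gradient f x, y - x⟫_ℝ + L / 2 * ‖y - x‖ ^ 2 + mu * ∑ i, |y i|))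
    (xstar : EuclideanSpace ℝ (Fin n)) (hmin : ∀ y, φ xstar ≤ φ y)
    (x xplus : EuclideanSpace ℝ (Fin n)) (hstep : φ xplus ≤ Γ x) :
    φ xplus - φ xstar ≤ (1 - lam / L) * (φ x - φ xstar) :=
  stmt_1_general hn f lam L mu hlam hL hmu hf hsc hlip φ hφ Γ hΓ xstar x xplus hstep
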